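/- Let B ∈ C² with div(B) = 0 and B(y) ≠ 0 for all y ∈ ℝ³, fix x₀, v₀ ∈ ℝ³, and let (x, h) be the unique global solution of the limit system. Suppose there exist T > 0 and a sequence ω_n → ∞ such that x_{ω_n} converges to x in W^{1,1}((0,T); ℝ³), i.e. ∫₀ᵀ |x_{ω_n}(t) − x(t)| dt + ∫₀ᵀ |x'_{ω_n}(t) − x'(t)| dt → 0. Then (v₀ · b(x₀))² = |v₀|², i.e. v₀ is parallel to b(x₀). Consequently, whenever v₀ is not parallel to b(x₀), the convergence of x_ω to x cannot be improved to W^{1,1}_loc (nor to C^{0,1}_loc) convergence. -/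

import Mathlib

/-!
A Lorentz trajectory keeps the speed `‖v₀‖`, since the magnetic force is orthogonal to the
velocity, whereas the limit trajectory moves with speed `|h|`. By the reverse triangle inequality,
`L¹(0,T)` convergence of the velocities forces the integral of the continuous, nonnegative function
`|‖v₀‖ - |h||` over `[0,T]` to vanish, so it vanishes at `t = 0`, where `h 0 = v₀ · b(x₀)`.
-/

noncomputable section

open Real Filter Topology MeasureTheory intervalIntegral Bornology

abbrev E3 : Type := EuclideanSpace ℝ (Fin 3)

def cross3 (u v : E3) : E3 :=
  (WithLp.equiv 2 (Fin 3 → ℝ)).symm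
    ![u 1 * v 2 - u 2 * v 1, u 2 * v 0 - u 0 * v 2, u 0 * v 1 - u 1 * v 0]

def divg (F : E3 → E3) (y : E3) : ℝ :=
  ∑ i : Fin 3, fderiv ℝ F y (EuclideanSpace.single i (1:ℝ)) i

def curl3 (F : E3 → E3) (y : E3) : E3 :=
  (WithLp.equiv 2 (Fin 3 → ℝ)).symm
    ![fderiv ℝ F y (EuclideanSpace.single 1 (1:ℝ)) 2 - fderiv ℝ F y (EuclideanSpace.single 2 (1:ℝ)) 1,
      fderiv ℝ F y (EuclideanSpace.single 2 (1:ℝ)) 0 - fderiv ℝ F y (EuclideanSpace.single 0 (1:ℝ)) 2,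
      fderiv ℝ F y (EuclideanSpace.single 0 (1:ℝ)) 1 - fderiv ℝ F y (EuclideanSpace.single 1 (1:ℝ)) 0]

def bdir (B : E3 → E3) (y : E3) : E3 := ‖B y‖⁻¹ • B y

def IsLorentzSol (B : E3 → E3) (ω : ℝ) (x₀ v₀ : E3) (x : ℝ → E3) : Prop :=
  x 0 = x₀ ∧ deriv x 0 = v₀ ∧ Differentiable ℝ x ∧
    ∀ t : ℝ, HasDerivAt (deriv x) (ω • cross3 (deriv x t) (B (x t))) t

def IsLimitSol (B : E3 → E3) (x₀ v₀ : E3) (x : ℝ → E3) (h : ℝ → ℝ) : Prop :=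
  x 0 = x₀ ∧ h 0 = (inner ℝ v₀ (bdir B x₀) : ℝ) ∧
    (∀ t : ℝ, HasDerivAt x (h t • bdir B (x t)) t) ∧
    (∀ t : ℝ, HasDerivAt h ((‖v₀‖ ^ 2 - h t ^ 2) / 2 * divg (bdir B) (x t)) t)

def IsCkBounded (k : ℕ) (B : E3 → E3) : Prop :=
  ContDiff ℝ k B ∧ ∀ i ≤ k, ∃ M : ℝ, ∀ y : E3, ‖iteratedFDeriv ℝ i B y‖ ≤ M

def MinimalGrowth (γ : ℝ) (B : E3 → E3) : Prop :=
  ∃ R C : ℝ, 0 < R ∧ 0 < C ∧ ∀ y : E3, R ≤ ‖y‖ → C / ‖y‖ ^ γ ≤ ‖B y‖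

open Set

theorem Continuous.eqOn_zero_of_intervalIntegral_nonpos {f : ℝ → ℝ} {a b : ℝ}
    (hf : Continuous f) (hf0 : 0 ≤ f) (hab : a < b) (hint : ∫ t in a..b, f t ≤ 0) :
    EqOn f 0 (Icc a b) := by
  intro t ht
  by_contra hne
  obtain ⟨s, hs⟩ : (Function.support f ∩ Ioo a b).Nonempty :=
    mem_closure_iff.1 (closure_Ioo hab.ne ▸ ht) _ hf.isOpen_support hne
  have hpos : 0 < volume (Function.support f ∩ Ioc a b) :=
    ((hf.isOpen_support.inter isOpen_Ioo).measure_pos volume ⟨s, hs⟩).trans_le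
      (measure_mono (inter_subset_inter_right _ Ioo_subset_Ioc_self))
  have := (integral_pos_iff_support_of_nonneg_ae' (ae_of_all _ hf0)
    (hf.intervalIntegrable a b)).2 ⟨hab, hpos⟩
  linarith

lemma inner_cross3_self_left (u v : E3) : (inner ℝ u (cross3 u v) : ℝ) = 0 := by
  simp [cross3, PiLp.inner_apply, Fin.sum_univ_three]
  ring

lemma norm_bdir {B : E3 → E3} {y : E3} (hy : B y ≠ 0) : ‖bdir B y‖ = 1 := by
  rw [bdir, norm_smul, norm_inv, norm_norm, inv_mul_cancel₀ (norm_ne_zero_iff.2 hy)]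

namespace IsLorentzSol

variable {B : E3 → E3} {ω : ℝ} {x₀ v₀ : E3} {y : ℝ → E3}

lemma continuous_deriv (hy : IsLorentzSol B ω x₀ v₀ y) : Continuous (deriv y) :=
  continuous_iff_continuousAt.2 fun t => (hy.2.2.2 t).continuousAt

lemma norm_deriv (hy : IsLorentzSol B ω x₀ v₀ y) (t : ℝ) : ‖deriv y t‖ = ‖v₀‖ := by
  have hsq : ∀ s, HasDerivAt (‖deriv y ·‖ ^ 2) 0 s := fun s => by
    simpa [real_inner_smul_right, inner_cross3_self_left] using (hy.2.2.2 s).norm_sq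
  have := is_const_of_deriv_eq_zero (fun s => (hsq s).differentiableAt)
    (fun s => (hsq s).deriv) t 0
  rw [← hy.2.1]
  exact (sq_eq_sq₀ (norm_nonneg _) (norm_nonneg _)).1 this

end IsLorentzSol

namespace IsLimitSol

variable {B : E3 → E3} {x₀ v₀ : E3} {x : ℝ → E3} {h : ℝ → ℝ}

lemma continuous_h (hlim : IsLimitSol B x₀ v₀ x h) : Continuous h :=
  continuous_iff_continuousAt.2 fun t => (hlim.2.2.2 t).continuousAt

lemma norm_deriv (hB0 : ∀ y, B y ≠ 0) (hlim : IsLimitSol B x₀ v₀ x h) (t : ℝ) :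
    ‖deriv x t‖ = |h t| := by
  rw [(hlim.2.2.1 t).deriv, norm_smul, norm_bdir (hB0 _), mul_one, Real.norm_eq_abs]

lemma intervalIntegrable_deriv (hB0 : ∀ y, B y ≠ 0) (hlim : IsLimitSol B x₀ v₀ x h)
    (a b : ℝ) : IntervalIntegrable (deriv x) volume a b :=
  (hlim.continuous_h.abs.intervalIntegrable a b).mono_fun' (aestronglyMeasurable_deriv x _)
    (ae_of_all _ fun t => (hlim.norm_deriv hB0 t).le)

end IsLimitSol

lemma IsLorentzSol.integral_abs_norm_sub_abs_le {B : E3 → E3} {ω : ℝ} {x₀ v₀ : E3}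
    {y x : ℝ → E3} {h : ℝ → ℝ} (hy : IsLorentzSol B ω x₀ v₀ y) (hB0 : ∀ y, B y ≠ 0)
    (hlim : IsLimitSol B x₀ v₀ x h) {T : ℝ} (hT : 0 ≤ T) :
    ∫ t in (0:ℝ)..T, |(‖v₀‖ - |h t|)| ≤ ∫ t in (0:ℝ)..T, ‖deriv y t - deriv x t‖ := by
  refine intervalIntegral.integral_mono_on hT
    ((continuous_const.sub hlim.continuous_h.abs).abs.intervalIntegrable 0 T)
    ((hy.continuous_deriv.intervalIntegrable 0 T).sub
      (hlim.intervalIntegrable_deriv hB0 0 T)).norm fun t _ => ?_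
  rw [← hy.norm_deriv t, ← hlim.norm_deriv hB0 t]
  exact abs_norm_sub_norm_le _ _

theorem no_W11_convergence_unless_parallel_general
    (B : E3 → E3)
    (hB0 : ∀ y : E3, B y ≠ 0) (x₀ v₀ : E3)
    (x : ℝ → E3) (h : ℝ → ℝ) (hlim : IsLimitSol B x₀ v₀ x h)
    (xω : ℝ → ℝ → E3) (hxω : ∀ ω : ℝ, 0 < ω → IsLorentzSol B ω x₀ v₀ (xω ω))
    (T : ℝ) (hT : 0 < T) (ωn : ℕ → ℝ) (hωpos : ∀ n : ℕ, 0 < ωn n)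
    (hconv : Tendsto (fun n : ℕ =>
        (∫ t in (0:ℝ)..T, ‖xω (ωn n) t - x t‖) +
          ∫ t in (0:ℝ)..T, ‖deriv (xω (ωn n)) t - deriv x t‖) atTop (𝓝 0)) :
    (inner ℝ v₀ (bdir B x₀) : ℝ) ^ 2 = ‖v₀‖ ^ 2 := by
  have hderiv : Tendsto (fun n => ∫ t in (0:ℝ)..T, ‖deriv (xω (ωn n)) t - deriv x t‖)
      atTop (𝓝 0) :=
    squeeze_zero (fun n => intervalIntegral.integral_nonneg hT.le fun t _ => norm_nonneg _)
      (fun n => le_add_of_nonneg_left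
        (intervalIntegral.integral_nonneg hT.le fun t _ => norm_nonneg _)) hconv
  have hgap : ∫ t in (0:ℝ)..T, |(‖v₀‖ - |h t|)| ≤ 0 := ge_of_tendsto' hderiv fun n =>
    (hxω _ (hωpos n)).integral_abs_norm_sub_abs_le hB0 hlim hT.le
  have hgap0 : |(‖v₀‖ - |h 0|)| = 0 :=
    (continuous_const.sub hlim.continuous_h.abs).abs.eqOn_zero_of_intervalIntegral_nonpos
      (fun t => abs_nonneg _) hT hgap ⟨le_rfl, hT.le⟩
  rw [← hlim.2.1, ← sq_abs, sub_eq_zero.1 (abs_eq_zero.1 hgap0)]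

theorem no_W11_convergence_unless_parallel
    (B : E3 → E3) (hB : IsCkBounded 2 B) (hdiv : ∀ y : E3, divg B y = 0)
    (hB0 : ∀ y : E3, B y ≠ 0) (x₀ v₀ : E3)
    (x : ℝ → E3) (h : ℝ → ℝ) (hlim : IsLimitSol B x₀ v₀ x h)
    (xω : ℝ → ℝ → E3) (hxω : ∀ ω : ℝ, 0 < ω → IsLorentzSol B ω x₀ v₀ (xω ω))
    (T : ℝ) (hT : 0 < T) (ωn : ℕ → ℝ) (hωpos : ∀ n : ℕ, 0 < ωn n)
    (hωtop : Tendsto ωn atTop atTop)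
    (hconv : Tendsto (fun n : ℕ =>
        (∫ t in (0:ℝ)..T, ‖xω (ωn n) t - x t‖) +
          ∫ t in (0:ℝ)..T, ‖deriv (xω (ωn n)) t - deriv x t‖) atTop (𝓝 0)) :
    (inner ℝ v₀ (bdir B x₀) : ℝ) ^ 2 = ‖v₀‖ ^ 2 :=
  no_W11_convergence_unless_parallel_general B hB0 x₀ v₀ x h hlim xω hxω T hT ωn hωpos hconv
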